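/- arXiv:1707.02416 — 5 statements merged into one kernel-verified Lean document; each statement's English description precedes it below -/
import Mathlib

section
/- Let R be a commutative ring, let p, q, z ∈ R with p and q invertible, define a ∘ b = p·a + q·b + z, and define a sequence (aₙ)ₙ≥₁ in R by the recurrence a₁ = 1 and aₙ₊₁ = q⁻¹·((1 − p)·aₙ − z) (equivalently, (1 − p)·aₙ = q·aₙ₊₁ + z). Then aₙ = aₙ ∘ aₙ₊₁ for all n ≥ 1; consequently (R, ∘, /, {aₙ}) with a / b = p⁻¹·a − p⁻¹·q·b − p⁻¹·z is a Conway algebra. -/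
/-- With `a ∘ b = p·a + q·b + z`, `a / b = p⁻¹·a − p⁻¹·q·b − p⁻¹·z`, and the
sequence defined by `a₁ = 1`, `aₙ₊₁ = q⁻¹·((1 − p)·aₙ − z)`, one gets a Conway
algebra: condition (2) `aₙ = aₙ ∘ aₙ₊₁` holds, together with conditions (1) and (3). -/
theorem conway_example_is_conway_algebra
    {R : Type*} [CommRing R] (p q : Rˣ) (z : R) (A : ℕ → R)
    (hA1 : A 1 = 1)
    (hArec : ∀ n : ℕ, 1 ≤ n → A (n + 1) = (↑q⁻¹ : R) * ((1 - (p : R)) * A n - z)) :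
    (∀ n : ℕ, 1 ≤ n →
        A n = (p : R) * A n + (q : R) * A (n + 1) + z) ∧
    (∀ a b : R,
        ((↑p⁻¹ : R) * ((p : R) * a + (q : R) * b + z)
            - (↑p⁻¹ : R) * (q : R) * b - (↑p⁻¹ : R) * z = a) ∧
        ((p : R) * ((↑p⁻¹ : R) * a - (↑p⁻¹ : R) * (q : R) * b - (↑p⁻¹ : R) * z)
            + (q : R) * b + z = a)) ∧
    (∀ a b c d : R,
        (p : R) * ((p : R) * a + (q : R) * b + z)
            + (q : R) * ((p : R) * c + (q : R) * d + z) + z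
          = (p : R) * ((p : R) * a + (q : R) * c + z)
            + (q : R) * ((p : R) * b + (q : R) * d + z) + z) := by
  have hq : (q : R) * (↑q⁻¹ : R) = 1 := q.mul_inv
  have hp : (↑p⁻¹ : R) * (p : R) = 1 := p.inv_mul
  have hp' : (p : R) * (↑p⁻¹ : R) = 1 := p.mul_inv
  refine ⟨fun n hn => ?_, fun a b => ⟨?_, ?_⟩, fun a b c d => by ring⟩
  · rw [hArec n hn]
    have : (p:R) * A n + (q:R) * ((↑q⁻¹ : R) * ((1 - (p:R)) * A n - z)) + z
        = (p:R) * A n + ((q:R) * (↑q⁻¹:R)) * ((1 - (p:R)) * A n - z) + z := by ring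
    rw [this, hq]; ring
  · have : (↑p⁻¹:R) * ((p:R) * a + (q:R) * b + z) - (↑p⁻¹:R) * (q:R) * b - (↑p⁻¹:R) * z
        = ((↑p⁻¹:R) * (p:R)) * a := by ring
    rw [this, hp, one_mul]
  · have : (p:R) * ((↑p⁻¹:R) * a - (↑p⁻¹:R) * (q:R) * b - (↑p⁻¹:R) * z) + (q:R) * b + z
        = ((p:R) * (↑p⁻¹:R)) * a + (1 - ((p:R) * (↑p⁻¹:R))) * ((q:R) * b + z) := by ring
    rw [this, hp']; ring
end

section
/- Let R be a commutative ring, let v, z ∈ R be invertible, and define binary operations on R by a ∘ b = v²·a + v·z·b and a / b = v⁻²·a − v⁻¹·z·b, together with the sequence aₙ = ((v⁻¹ − v)·z⁻¹)ⁿ⁻¹ for n ≥ 1. Then (R, ∘, /, {aₙ}) is a Conway algebra: (1) (a ∘ b) / b = a = (a / b) ∘ b for all a, b; (2) aₙ = aₙ ∘ aₙ₊₁ for all n ≥ 1; (3) (a ∘ b) ∘ (c ∘ d) = (a ∘ c) ∘ (b ∘ d) for all a, b, c, d. -/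
/-- The operations `a ∘ b = v²·a + v·z·b`, `a / b = v⁻²·a − v⁻¹·z·b` together with
`aₙ = ((v⁻¹ − v)·z⁻¹)ⁿ⁻¹` form a Conway algebra. -/
theorem conway_homflypt_is_conway_algebra
    {R : Type*} [CommRing R] (v z : Rˣ) :
    (∀ a b : R,
        ((↑v⁻¹ : R) ^ 2 * ((v : R) ^ 2 * a + (v : R) * (z : R) * b)
            - (↑v⁻¹ : R) * (z : R) * b = a) ∧
        ((v : R) ^ 2 * ((↑v⁻¹ : R) ^ 2 * a - (↑v⁻¹ : R) * (z : R) * b)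
            + (v : R) * (z : R) * b = a)) ∧
    (∀ n : ℕ, 1 ≤ n →
        (((↑v⁻¹ : R) - (v : R)) * (↑z⁻¹ : R)) ^ (n - 1)
          = (v : R) ^ 2 * (((↑v⁻¹ : R) - (v : R)) * (↑z⁻¹ : R)) ^ (n - 1)
            + (v : R) * (z : R) * (((↑v⁻¹ : R) - (v : R)) * (↑z⁻¹ : R)) ^ (n + 1 - 1)) ∧
    (∀ a b c d : R,
        (v : R) ^ 2 * ((v : R) ^ 2 * a + (v : R) * (z : R) * b)
            + (v : R) * (z : R) * ((v : R) ^ 2 * c + (v : R) * (z : R) * d)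
          = (v : R) ^ 2 * ((v : R) ^ 2 * a + (v : R) * (z : R) * c)
            + (v : R) * (z : R) * ((v : R) ^ 2 * b + (v : R) * (z : R) * d)) := by
  have h : (↑v⁻¹ : R) * (v : R) = 1 := v.inv_mul
  have hz : (↑z⁻¹ : R) * (z : R) = 1 := z.inv_mul
  refine ⟨fun a b => ⟨?_, ?_⟩, fun n hn => ?_, fun a b c d => by ring⟩
  · linear_combination (((↑v⁻¹ : R) * (v : R) + 1) * a + (↑v⁻¹ : R) * (z : R) * b) * h
  · linear_combination (((↑v⁻¹ : R) * (v : R) + 1) * a - (v : R) * (z : R) * b) * h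
  · obtain ⟨m, rfl⟩ := Nat.exists_eq_add_of_le hn
    set x : R := ((↑v⁻¹ : R) - (v : R)) * (↑z⁻¹ : R)
    have e1 : 1 + m - 1 = m := by omega
    have e2 : 1 + m + 1 - 1 = m + 1 := by omega
    rw [e1, e2, pow_succ]
    linear_combination x ^ m * (-((↑z⁻¹ : R) * (z : R)) * h + ((v:R)^2 - 1) * hz)
end

section
/- Let R be a commutative ring, let v, w ∈ R be invertible and z ∈ R, and define four binary operations on R by a ∘ b = v²·a + v·w·b, a / b = v⁻²·a − v⁻¹·w·b, a ∗ b = v²·a + v·z·b, a ∕∕ b = v⁻²·a − v⁻¹·z·b, together with the sequence aₙ = ((v⁻¹ − v)·w⁻¹)ⁿ⁻¹ for n ≥ 1. Then (R, ∘, /, ∗, ∕∕, {aₙ}) is a generalized Conway algebra of type 1, i.e., conditions (A)–(G) hold: (A) (a ∘ b)/b = (a/b) ∘ b = a = (a ∗ b) ∕∕ b = (a ∕∕ b) ∗ b; (B) aₙ = aₙ ∘ aₙ₊₁; (C) (a ∘ b) ∘ (c ∘ d) = (a ∘ c) ∘ (b ∘ d); (D) (a ∗ b) ∗ (c ∗ d)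 = (a ∗ c) ∗ (b ∗ d); (E) (a ∘ b) ∘ (c ∗ d) = (a ∘ c) ∘ (b ∗ d); (F) (a ∗ b) ∗ (c ∘ d) = (a ∗ c) ∗ (b ∘ d); (G) (a ∘ b) ∗ (c ∘ d) = (a ∗ c) ∘ (b ∗ d). -/
/-- With `a ∘ b = v²·a + v·w·b`, `a / b = v⁻²·a − v⁻¹·w·b`,
`a ∗ b = v²·a + v·z·b`, `a ∕∕ b = v⁻²·a − v⁻¹·z·b` and
`aₙ = ((v⁻¹ − v)·w⁻¹)ⁿ⁻¹`, all conditions (A)–(G) of a generalized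
Conway algebra of type 1 hold. -/
theorem gen_conway_homflypt_is_gen_conway_algebra
    {R : Type*} [CommRing R] (v w : Rˣ) (z : R) :
    -- (A)
    (∀ a b : R,
      ((↑v⁻¹ : R) ^ 2 * ((v : R) ^ 2 * a + (v : R) * (w : R) * b)
          - (↑v⁻¹ : R) * (w : R) * b = a) ∧
      ((v : R) ^ 2 * ((↑v⁻¹ : R) ^ 2 * a - (↑v⁻¹ : R) * (w : R) * b)
          + (v : R) * (w : R) * b = a) ∧
      ((↑v⁻¹ : R) ^ 2 * ((v : R) ^ 2 * a + (v : R) * z * b)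
          - (↑v⁻¹ : R) * z * b = a) ∧
      ((v : R) ^ 2 * ((↑v⁻¹ : R) ^ 2 * a - (↑v⁻¹ : R) * z * b)
          + (v : R) * z * b = a)) ∧
    -- (B)
    (∀ n : ℕ, 1 ≤ n →
      (((↑v⁻¹ : R) - (v : R)) * (↑w⁻¹ : R)) ^ (n - 1)
        = (v : R) ^ 2 * (((↑v⁻¹ : R) - (v : R)) * (↑w⁻¹ : R)) ^ (n - 1)
          + (v : R) * (w : R) * (((↑v⁻¹ : R) - (v : R)) * (↑w⁻¹ : R)) ^ (n + 1 - 1)) ∧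
    -- (C)
    (∀ a b c d : R,
      (v : R) ^ 2 * ((v : R) ^ 2 * a + (v : R) * (w : R) * b)
          + (v : R) * (w : R) * ((v : R) ^ 2 * c + (v : R) * (w : R) * d)
        = (v : R) ^ 2 * ((v : R) ^ 2 * a + (v : R) * (w : R) * c)
          + (v : R) * (w : R) * ((v : R) ^ 2 * b + (v : R) * (w : R) * d)) ∧
    -- (D)
    (∀ a b c d : R,
      (v : R) ^ 2 * ((v : R) ^ 2 * a + (v : R) * z * b)
          + (v : R) * z * ((v : R) ^ 2 * c + (v : R) * z * d)
        = (v : R) ^ 2 * ((v : R) ^ 2 * a + (v : R) * z * c)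
          + (v : R) * z * ((v : R) ^ 2 * b + (v : R) * z * d)) ∧
    -- (E)
    (∀ a b c d : R,
      (v : R) ^ 2 * ((v : R) ^ 2 * a + (v : R) * (w : R) * b)
          + (v : R) * (w : R) * ((v : R) ^ 2 * c + (v : R) * z * d)
        = (v : R) ^ 2 * ((v : R) ^ 2 * a + (v : R) * (w : R) * c)
          + (v : R) * (w : R) * ((v : R) ^ 2 * b + (v : R) * z * d)) ∧
    -- (F)
    (∀ a b c d : R,
      (v : R) ^ 2 * ((v : R) ^ 2 * a + (v : R) * z * b)
          + (v : R) * z * ((v : R) ^ 2 * c + (v : R) * (w : R) * d)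
        = (v : R) ^ 2 * ((v : R) ^ 2 * a + (v : R) * z * c)
          + (v : R) * z * ((v : R) ^ 2 * b + (v : R) * (w : R) * d)) ∧
    -- (G)
    (∀ a b c d : R,
      (v : R) ^ 2 * ((v : R) ^ 2 * a + (v : R) * (w : R) * b)
          + (v : R) * z * ((v : R) ^ 2 * c + (v : R) * (w : R) * d)
        = (v : R) ^ 2 * ((v : R) ^ 2 * a + (v : R) * z * c)
          + (v : R) * (w : R) * ((v : R) ^ 2 * b + (v : R) * z * d)) := by

  have hv : (v : R) * (↑v⁻¹ : R) = 1 := by exact_mod_cast v.mul_inv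
  have hw : (w : R) * (↑w⁻¹ : R) = 1 := by exact_mod_cast w.mul_inv
  refine ⟨fun a b => ⟨?_, ?_, ?_, ?_⟩, fun n hn => ?_, fun a b c d => by ring,
    fun a b c d => by ring, fun a b c d => by ring, fun a b c d => by ring,
    fun a b c d => by ring⟩
  · linear_combination (((v:R)*(↑v⁻¹:R)+1)*a + (↑v⁻¹:R)*(w:R)*b) * hv
  · linear_combination (((v:R)*(↑v⁻¹:R)+1)*a - (v:R)*(w:R)*b) * hv
  · linear_combination (((v:R)*(↑v⁻¹:R)+1)*a + (↑v⁻¹:R)*z*b) * hv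
  · linear_combination (((v:R)*(↑v⁻¹:R)+1)*a - (v:R)*z*b) * hv
  · obtain ⟨m, rfl⟩ : ∃ m, n = m + 1 := ⟨n - 1, (Nat.succ_pred_eq_of_pos hn).symm⟩
    simp only [Nat.add_sub_cancel]
    have key : (v:R)^2 + (v:R)*(w:R)*(((↑v⁻¹:R) - (v:R))*(↑w⁻¹:R)) = 1 := by
      linear_combination hv + ((v:R)*((↑v⁻¹:R)-(v:R)))*hw
    linear_combination (-((((↑v⁻¹:R) - (v:R))*(↑w⁻¹:R))^m)) * key
end

section
/- Let k ≥ 1 be a natural number, let R be a commutative ring with invertible elements p, q, r ∈ Rˣ, and let ρ : R → R be a function satisfying ρ(f)ᵏ = f, ρ(fᵏ) = f, and ρ(f)·ρ(g) = ρ(f·g) for all f, g ∈ R. Define a ∘ b = ρ(p·aᵏ + q·bᵏ) and a ∗ b = ρ(p·aᵏ + r·bᵏ). Then for all a, b, c, d ∈ R: (a ∘ b) ∘ (c ∗ d) = (a ∘ c) ∘ (b ∗ d) and (a ∗ b) ∗ (c ∘ d) = (a ∗ c) ∗ (b ∘ d) (conditions (E) and (F)). -/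
/-- Conditions (E) and (F) for the non-linear operations
`a ∘ b = ρ(p·aᵏ + q·bᵏ)` and `a ∗ b = ρ(p·aᵏ + r·bᵏ)`. -/
theorem nonlinear_gen_conway_conditions_E_F
    {R : Type*} [CommRing R] (k : ℕ) (hk : 1 ≤ k) (p q r : Rˣ) (ρ : R → R)
    (hρ1 : ∀ f : R, (ρ f) ^ k = f)
    (hρ2 : ∀ f : R, ρ (f ^ k) = f)
    (hρ3 : ∀ f g : R, ρ f * ρ g = ρ (f * g)) :
    ∀ a b c d : R,
      (ρ ((p : R) * (ρ ((p : R) * a ^ k + (q : R) * b ^ k)) ^ k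
            + (q : R) * (ρ ((p : R) * c ^ k + (r : R) * d ^ k)) ^ k)
        = ρ ((p : R) * (ρ ((p : R) * a ^ k + (q : R) * c ^ k)) ^ k
            + (q : R) * (ρ ((p : R) * b ^ k + (r : R) * d ^ k)) ^ k)) ∧
      (ρ ((p : R) * (ρ ((p : R) * a ^ k + (r : R) * b ^ k)) ^ k
            + (r : R) * (ρ ((p : R) * c ^ k + (q : R) * d ^ k)) ^ k)
        = ρ ((p : R) * (ρ ((p : R) * a ^ k + (r : R) * c ^ k)) ^ k
            + (r : R) * (ρ ((p : R) * b ^ k + (q : R) * d ^ k)) ^ k)) := by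
  intro a b c d
  constructor <;> · rw [hρ1, hρ1, hρ1, hρ1]; ring_nf
end

section
/- Let k ≥ 1 be a natural number, let R be a commutative ring with invertible elements p, q, r ∈ Rˣ, and let ρ : R → R be a function satisfying ρ(f)ᵏ = f, ρ(fᵏ) = f, and ρ(f)·ρ(g) = ρ(f·g) for all f, g ∈ R. Define a ∘ b = ρ(p·aᵏ + q·bᵏ) and a ∗ b = ρ(p·aᵏ + r·bᵏ). Then for all a, b, c, d ∈ R: (a ∘ b) ∗ (c ∘ d) = (a ∗ c) ∘ (b ∗ d) (condition (G)). -/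
/-- Condition (G) for the non-linear operations
`a ∘ b = ρ(p·aᵏ + q·bᵏ)` and `a ∗ b = ρ(p·aᵏ + r·bᵏ)`. -/
theorem nonlinear_gen_conway_condition_G
    {R : Type*} [CommRing R] (k : ℕ) (hk : 1 ≤ k) (p q r : Rˣ) (ρ : R → R)
    (hρ1 : ∀ f : R, (ρ f) ^ k = f)
    (hρ2 : ∀ f : R, ρ (f ^ k) = f)
    (hρ3 : ∀ f g : R, ρ f * ρ g = ρ (f * g)) :
    ∀ a b c d : R,
      ρ ((p : R) * (ρ ((p : R) * a ^ k + (q : R) * b ^ k)) ^ k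
            + (r : R) * (ρ ((p : R) * c ^ k + (q : R) * d ^ k)) ^ k)
        = ρ ((p : R) * (ρ ((p : R) * a ^ k + (r : R) * c ^ k)) ^ k
            + (q : R) * (ρ ((p : R) * b ^ k + (r : R) * d ^ k)) ^ k) := by
  intro a b c d
  simp only [hρ1]
  ring_nf
end
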